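/- arXiv:1808.08699 — 3 statements merged into one kernel-verified Lean document; each statement's English description precedes it below -/
import Mathlib

section
/- For all m ≥ 1, n ≥ 1, k ∈ ℕ, the m-nested power sum admits the closed form S(m, n, k) = Σ_{r=1}^{n} C(n - r + m - 1, m - 1) · r^k, i.e., the coefficient of r^k in the m-nested sum is the binomial coefficient C(n - r + m - 1, m - 1). -/
/-!
One more level of nesting sums the weights `C(j - r + m, m)` over `r ≤ j ≤ n`; after swapping
the two sums, the hockey-stick identity turns this into `C(n - r + m + 1, m + 1)`, so the closed
form follows by induction on `m`.
-/

open Finset Nat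

def S : ℕ → ℕ → ℕ → ℕ
  | 0, n, k => n ^ k
  | m + 1, n, k => ∑ r ∈ Finset.Icc 1 n, S m r k

theorem Finset.sum_Icc_Icc_comm {M : Type*} [AddCommMonoid M] (a b : ℕ) (f : ℕ → ℕ → M) :
    ∑ j ∈ Icc a b, ∑ i ∈ Icc a j, f i j = ∑ i ∈ Icc a b, ∑ j ∈ Icc i b, f i j := by
  simp only [← Ico_add_one_right_eq_Icc]
  exact (sum_Ico_Ico_comm a (b + 1) f).symm

theorem Nat.sum_Icc_choose_sub_add (m : ℕ) {r n : ℕ} (hrn : r ≤ n) :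
    ∑ j ∈ Icc r n, (j - r + m).choose m = (n - r + m + 1).choose (m + 1) := by
  rw [← Ico_add_one_right_eq_Icc, sum_Ico_eq_sum_range, show n + 1 - r = n - r + 1 by omega]
  simp only [Nat.add_sub_cancel_left]
  exact sum_range_add_choose (n - r) m

theorem sum_Icc_sum_Icc_choose_mul {R : Type*} [NonAssocSemiring R] (f : ℕ → R) (m n : ℕ) :
    ∑ j ∈ Icc 1 n, ∑ r ∈ Icc 1 j, ((j - r + m).choose m : R) * f r =
      ∑ r ∈ Icc 1 n, ((n - r + m + 1).choose (m + 1) : R) * f r := by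
  rw [sum_Icc_Icc_comm]
  refine sum_congr rfl fun r hr => ?_
  rw [← sum_mul, ← Nat.cast_sum, sum_Icc_choose_sub_add m (mem_Icc.mp hr).2]

theorem S_succ (m n k : ℕ) :
    S (m + 1) n k = ∑ r ∈ Icc 1 n, (n - r + m).choose m * r ^ k := by
  induction m generalizing n with
  | zero => simp [S]
  | succ m ih =>
    calc S (m + 2) n k = ∑ j ∈ Icc 1 n, S (m + 1) j k := rfl
      _ = ∑ j ∈ Icc 1 n, ∑ r ∈ Icc 1 j, (j - r + m).choose m * r ^ k := by simp only [ih]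
      _ = ∑ r ∈ Icc 1 n, (n - r + (m + 1)).choose (m + 1) * r ^ k :=
        sum_Icc_sum_Icc_choose_mul (· ^ k) m n

theorem stmt1_general (m n k : ℕ) (hm : 1 ≤ m) :
    S m n k = ∑ r ∈ Finset.Icc 1 n, Nat.choose (n - r + m - 1) (m - 1) * r ^ k := by
  obtain ⟨m, rfl⟩ := Nat.exists_eq_add_of_le' hm
  simpa using S_succ m n k

theorem stmt1 (m n k : ℕ) (hm : 1 ≤ m) (hn : 1 ≤ n) :
    S m n k = ∑ r ∈ Finset.Icc 1 n, Nat.choose (n - r + m - 1) (m - 1) * r ^ k :=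
  stmt1_general m n k hm
end

section
/- For all m ≥ 1, n ≥ 2, k ∈ ℕ: S(m, n, k+1) = n · S(m, n, k) − m · S(m+1, n−1, k). -/
open Finset Nat

/-!
The recurrence `S (m+1) (n+1) = S (m+1) n + S m (n+1)` makes the identity for `(m+1, n+1)`
the sum of the identities for `(m+1, n)` and `(m, n+1)`, so it follows by induction on `m` and
then on `n`, starting from `(n+1) (n+1)^k = (n+1)^(k+1)` at `m = 0`.
-/

theorem S_zero_left (n k : ℕ) : S 0 n k = n ^ k := by
  rw [S]

theorem S_succ_zero (m k : ℕ) : S (m + 1) 0 k = 0 := by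
  rw [S]; simp

theorem S_succ_succ (m n k : ℕ) : S (m + 1) (n + 1) k = S (m + 1) n k + S m (n + 1) k := by
  simp only [S]
  exact sum_Icc_succ_top (by omega) _

theorem S_one (m k : ℕ) : S m 1 k = 1 := by
  induction m with
  | zero => simp [S_zero_left]
  | succ m ih => rw [S_succ_succ, S_succ_zero, ih]

theorem succ_mul_S_succ (m n k : ℕ) :
    (n + 1) * S m (n + 1) k = S m (n + 1) (k + 1) + m * S (m + 1) n k := by
  induction m generalizing n with
  | zero => simp only [S_zero_left, pow_succ]; ring
  | succ m ihm =>
    induction n with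
    | zero => simp [S_one, S_succ_zero]
    | succ n ihn =>
      rw [S_succ_succ m (n + 1) k, S_succ_succ m (n + 1) (k + 1), S_succ_succ (m + 1) n k]
      linear_combination ihn + ihm (n + 1)

theorem stmt2_general (m n k : ℕ) :
    n * S m n k = S m n (k + 1) + m * S (m + 1) (n - 1) k := by
  cases n with
  | zero => cases m <;> simp [S_zero_left, S_succ_zero]
  | succ n => exact succ_mul_S_succ m n k

theorem stmt2 (m n k : ℕ) (hm : 1 ≤ m) (hn : 2 ≤ n) :
    n * S m n k = S m n (k + 1) + m * S (m + 1) (n - 1) k :=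
  stmt2_general m n k
end

section
/- For all n, k ∈ ℕ: (n+1)^k = Σ_{i=0}^{k} C(n, i) · μ(k, i). -/
open Finset Nat

def saras : ℕ → ℕ → ℕ
  | _, 0 => 1
  | 0, _ + 1 => 0
  | k + 1, r + 1 =>
      if r + 1 ≤ k + 1 then (r + 1) * saras k r + (r + 2) * saras k (r + 1) else 0

/-!
Induction on `k`. Multiplying the expansion of `(n + 1) ^ k` by `n + 1` and using
`(n + 1) C(n, i) = (i + 1) C(n, i) + (i + 1) C(n, i + 1)` splits each term in two; after shifting
the index of the terms carrying `C(n, i)`, the coefficient of `C(n, i + 1)` is exactly the Saras recurrence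
for `μ(k + 1, i + 1)`.
-/

theorem saras_eq_zero_of_lt : ∀ {k r : ℕ}, k < r → saras k r = 0
  | _, 0, h => absurd h (Nat.not_lt_zero _)
  | 0, _ + 1, _ => rfl
  | k + 1, r + 1, h => by simp [saras, Nat.not_le.mpr h]

theorem saras_zero_right (k : ℕ) : saras k 0 = 1 := by
  cases k <;> rfl

/-- The recurrence holds for all `r`: when `r > k` both sides vanish. -/
theorem saras_succ_succ (k r : ℕ) :
    saras (k + 1) (r + 1) = (r + 1) * saras k r + (r + 2) * saras k (r + 1) := by
  by_cases h : r ≤ k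
  · simp [saras, h]
  · simp [saras, h, saras_eq_zero_of_lt (Nat.lt_of_not_le h),
      saras_eq_zero_of_lt (Nat.lt_succ_of_lt (Nat.lt_of_not_le h))]

theorem succ_mul_choose_eq_add (n i : ℕ) :
    (n + 1) * choose n i = (i + 1) * choose n i + (i + 1) * choose n (i + 1) := by
  rw [add_one_mul_choose_eq, choose_succ_succ]
  ring

theorem sum_choose_mul_saras_succ (n : ℕ) {k N : ℕ} (hkN : k < N) :
    ∑ i ∈ range (N + 1), choose n i * saras (k + 1) i =
      (n + 1) * ∑ i ∈ range N, choose n i * saras k i := by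
  have hshift : ∑ i ∈ range N, (i + 2) * choose n (i + 1) * saras k (i + 1) + 1 =
      ∑ i ∈ range N, (i + 1) * choose n i * saras k i := by
    calc _ = ∑ i ∈ range (N + 1), (i + 1) * choose n i * saras k i := by
          rw [sum_range_succ']
          simp [saras_zero_right]
      _ = _ := by rw [sum_range_succ, saras_eq_zero_of_lt hkN, mul_zero, add_zero]
  calc ∑ i ∈ range (N + 1), choose n i * saras (k + 1) i
      = ∑ i ∈ range N, (i + 1) * choose n (i + 1) * saras k i +
          (∑ i ∈ range N, (i + 2) * choose n (i + 1) * saras k (i + 1) + 1) := by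
        rw [sum_range_succ', ← add_assoc, ← sum_add_distrib]
        simp only [saras_succ_succ, choose_zero_right, saras_zero_right]
        congr 1
        exact sum_congr rfl fun i _ => by ring
    _ = ∑ i ∈ range N, (i + 1) * choose n (i + 1) * saras k i +
          ∑ i ∈ range N, (i + 1) * choose n i * saras k i := by rw [hshift]
    _ = (n + 1) * ∑ i ∈ range N, choose n i * saras k i := by
        rw [mul_sum, ← sum_add_distrib]
        refine sum_congr rfl fun i _ => ?_
        rw [← mul_assoc, succ_mul_choose_eq_add]
        ring

theorem stmt5 (n k : ℕ) :
    (n + 1) ^ k = ∑ i ∈ Finset.range (k + 1), Nat.choose n i * saras k i := by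
  induction k with
  | zero => simp [saras_zero_right]
  | succ k ih => rw [sum_choose_mul_saras_succ n (Nat.lt_succ_self k), ← ih, pow_succ, mul_comm]
end
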